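/- The USL sentence ψ9 := ⟨⟨x⟩⟩(a,x)□(⟨⟨x_0⟩⟩(a,x_0)∘p ∧ ⟨⟨x_0⟩⟩(a,x_0)∘¬p) is satisfiable in a NATS: it is true at state s_0 of the (non-deterministic) NATS M2. (Thus sustainable control is realized in some non-deterministic models, while it fails in all deterministic ones.) -/

import Mathlib

namespace USL

attribute [local instance] Classical.propDecidable

/-- A Non-deterministic Alternating Transition System (NATS). -/
structure NATS (Ag St At : Type) where
  v : St → Set At
  Ch : Ag → St → Set (Set St)
  Ch_nonempty : ∀ a s, (Ch a s).Nonempty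
  Ch_inter : ∀ a₁ a₂ : Ag, a₁ ≠ a₂ → ∀ s : St,
    ∀ c₁ ∈ Ch a₁ s, ∀ c₂ ∈ Ch a₂ s, (c₁ ∩ c₂).Nonempty

variable {Ag St At X : Type}

/-- A strategy, represented on tracks given as (history, current state). -/
structure NATS.Strategy (M : NATS Ag St At) where
  f : Ag → List St → St → Set St
  valid : ∀ a h s, f a h s ∈ M.Ch a s

/-- Translation σ^τ of a strategy by a track prefix τ. -/
def NATS.Strategy.shift {M : NATS Ag St At} (σ : M.Strategy) (τ : List St) : M.Strategy :=
  ⟨fun a h s => σ.f a (τ ++ h) s, fun a h s => σ.valid a (τ ++ h) s⟩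

/-- A (partial) assignment of strategies to variables. -/
def NATS.Assignment (M : NATS Ag St At) (X : Type) : Type := X → Option M.Strategy

def NATS.Assignment.shift {M : NATS Ag St At} (μ : M.Assignment X) (τ : List St) :
    M.Assignment X :=
  fun x => (μ x).map (fun σ => σ.shift τ)

/-- A commitment: a finite sequence over P(Ag) × X; the head is the most recent binding. -/
abbrev Commitment (Ag X : Type) := List (Set Ag × X)

/-- The choice induced by a single binding (A, x). -/
noncomputable def bindChoice {M : NATS Ag St At} (μ : M.Assignment X) (A : Set Ag) (x : X)
    (h : List St) (s : St) : Set St :=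
  match μ x with
  | some σ => if A.Nonempty then ⋂ a ∈ A, σ.f a h s else Set.univ
  | none => Set.univ

/-- The function from tracks to sets of states induced by a context (μ, κ);
    older bindings (towards the tail) have priority. -/
noncomputable def ctxFun {M : NATS Ag St At} (μ : M.Assignment X) :
    Commitment Ag X → List St → St → Set St
  | [] => fun _ _ => Set.univ
  | (A, x) :: κ => fun h s =>
      let r := ctxFun μ κ h s
      if (r ∩ bindChoice μ A x h s).Nonempty then r ∩ bindChoice μ A x h s else r

/-- One step of the transition relation of a NATS. -/
def NATS.Step (M : NATS Ag St At) (s s' : St) : Prop := ∀ a : Ag, ∃ c ∈ M.Ch a s, s' ∈ c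

/-- A path: an infinite sequence of states all of whose finite prefixes are tracks. -/
def NATS.IsPath (M : NATS Ag St At) (lam : ℕ → St) : Prop := ∀ n, M.Step (lam n) (lam (n + 1))

/-- The history λ_0 … λ_{n-1}. -/
def histOf (lam : ℕ → St) (n : ℕ) : List St := (List.range n).map lam

/-- The outcomes of a context (μ, κ) from a state s. -/
def outcomes (M : NATS Ag St At) (μ : M.Assignment X) (κ : Commitment Ag X) (s : St) :
    Set (ℕ → St) :=
  {lam | M.IsPath lam ∧ lam 0 = s ∧ ∀ n, lam (n + 1) ∈ ctxFun μ κ (histOf lam n) (lam n)}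

mutual
/-- USL state formulas. -/
inductive StateForm (Ag At X : Type) : Type where
  | atom (p : At)
  | snot (φ : StateForm Ag At X)
  | sand (φ₁ φ₂ : StateForm Ag At X)
  | exq (x : X) (φ : StateForm Ag At X)
  | bind (A : Set Ag) (x : X) (ψ : PathForm Ag At X)
  | unbind (A : Set Ag) (x : X) (ψ : PathForm Ag At X)
/-- USL path formulas. -/
inductive PathForm (Ag At X : Type) : Type where
  | ofState (φ : StateForm Ag At X)
  | pnot (ψ : PathForm Ag At X)
  | pand (ψ₁ ψ₂ : PathForm Ag At X)
  | puntil (ψ₁ ψ₂ : PathForm Ag At X)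
  | pnext (ψ : PathForm Ag At X)
end

/-- The commitment κ[A ↛ x]: every pair (B, x) is replaced by (B ∖ A, x). -/
noncomputable def unbindCom (A : Set Ag) (x : X) (κ : Commitment Ag X) : Commitment Ag X :=
  κ.map (fun e => if e.2 = x then (e.1 \ A, e.2) else e)

mutual
/-- USL satisfaction, state formulas. -/
def SatS (M : NATS Ag St At) (μ : M.Assignment X) (κ : Commitment Ag X) (s : St) :
    StateForm Ag At X → Prop
  | .atom p => p ∈ M.v s
  | .snot φ => ¬ SatS M μ κ s φ
  | .sand φ₁ φ₂ => SatS M μ κ s φ₁ ∧ SatS M μ κ s φ₂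
  | .exq x φ => ∃ σ : M.Strategy, SatS M (Function.update μ x (some σ)) κ s φ
  | .bind A x ψ => ∀ lam ∈ outcomes M μ ((A, x) :: κ) s, SatP M μ ((A, x) :: κ) lam ψ
  | .unbind A x ψ =>
      ∀ lam ∈ outcomes M μ (unbindCom A x κ) s, SatP M μ (unbindCom A x κ) lam ψ
/-- USL satisfaction, path formulas. -/
def SatP (M : NATS Ag St At) (μ : M.Assignment X) (κ : Commitment Ag X) (lam : ℕ → St) :
    PathForm Ag At X → Prop
  | .ofState φ => SatS M μ κ (lam 0) φ
  | .pnot ψ => ¬ SatP M μ κ lam ψ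
  | .pand ψ₁ ψ₂ => SatP M μ κ lam ψ₁ ∧ SatP M μ κ lam ψ₂
  | .puntil ψ₁ ψ₂ => ∃ i : ℕ,
      SatP M (μ.shift (histOf lam i)) κ (fun n => lam (n + i)) ψ₂ ∧
      ∀ j < i, SatP M (μ.shift (histOf lam j)) κ (fun n => lam (n + j)) ψ₁
  | .pnext ψ => SatP M (μ.shift [lam 0]) κ (fun n => lam (n + 1)) ψ
end

/-- The empty assignment. -/
def emptyAsg (M : NATS Ag St At) (X : Type) : M.Assignment X := fun _ => none

/-- Truth of a USL sentence at a state: empty assignment and empty commitment. -/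
def USLTrue (M : NATS Ag St At) (s : St) (φ : StateForm Ag At X) : Prop :=
  SatS M (emptyAsg M X) [] s φ

mutual
/-- Free variables of a state formula. -/
def freeS : StateForm Ag At X → Set X
  | .atom _ => ∅
  | .snot φ => freeS φ
  | .sand φ₁ φ₂ => freeS φ₁ ∪ freeS φ₂
  | .exq x φ => freeS φ \ {x}
  | .bind _ x ψ => freeP ψ ∪ {x}
  | .unbind _ x ψ => freeP ψ ∪ {x}
/-- Free variables of a path formula. -/
def freeP : PathForm Ag At X → Set X
  | .ofState φ => freeS φ
  | .pnot ψ => freeP ψ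
  | .pand ψ₁ ψ₂ => freeP ψ₁ ∪ freeP ψ₂
  | .puntil ψ₁ ψ₂ => freeP ψ₁ ∪ freeP ψ₂
  | .pnext ψ => freeP ψ
end

/-- A sentence: a formula with no free variable. -/
def StateForm.IsSentence (φ : StateForm Ag At X) : Prop := freeS φ = ∅

mutual
/-- SL formulas: USL formulas with no unbinder whose binders bind single agents. -/
def IsSLS : StateForm Ag At X → Prop
  | .atom _ => True
  | .snot φ => IsSLS φ
  | .sand φ₁ φ₂ => IsSLS φ₁ ∧ IsSLS φ₂
  | .exq _ φ => IsSLS φ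
  | .bind A _ ψ => (∃ a : Ag, A = {a}) ∧ IsSLP ψ
  | .unbind _ _ _ => False
def IsSLP : PathForm Ag At X → Prop
  | .ofState φ => IsSLS φ
  | .pnot ψ => IsSLP ψ
  | .pand ψ₁ ψ₂ => IsSLP ψ₁ ∧ IsSLP ψ₂
  | .puntil ψ₁ ψ₂ => IsSLP ψ₁ ∧ IsSLP ψ₂
  | .pnext ψ => IsSLP ψ
end

/-- The commitment κ* used by the generalized SL binder: every pair (A, y) is replaced
    by (A, x); if there is no such pair, (A, x) is appended as the most recent binding. -/
noncomputable def slRebind (A : Set Ag) (x : X) (κ : Commitment Ag X) : Commitment Ag X :=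
  if ∃ e ∈ κ, e.1 = A then κ.map (fun e => if e.1 = A then (A, x) else e) else (A, x) :: κ

mutual
/-- Generalized SL satisfaction over NATS, state formulas: as USL except the binder
    clause, where binding revokes the agent's previously bound strategies. -/
def SatSLS (M : NATS Ag St At) (μ : M.Assignment X) (κ : Commitment Ag X) (s : St) :
    StateForm Ag At X → Prop
  | .atom p => p ∈ M.v s
  | .snot φ => ¬ SatSLS M μ κ s φ
  | .sand φ₁ φ₂ => SatSLS M μ κ s φ₁ ∧ SatSLS M μ κ s φ₂
  | .exq x φ => ∃ σ : M.Strategy, SatSLS M (Function.update μ x (some σ)) κ s φ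
  | .bind A x ψ =>
      ∀ lam ∈ outcomes M μ (slRebind A x κ) s, SatSLP M μ (slRebind A x κ) lam ψ
  | .unbind A x ψ =>
      ∀ lam ∈ outcomes M μ (unbindCom A x κ) s, SatSLP M μ (unbindCom A x κ) lam ψ
/-- Generalized SL satisfaction over NATS, path formulas. -/
def SatSLP (M : NATS Ag St At) (μ : M.Assignment X) (κ : Commitment Ag X) (lam : ℕ → St) :
    PathForm Ag At X → Prop
  | .ofState φ => SatSLS M μ κ (lam 0) φ
  | .pnot ψ => ¬ SatSLP M μ κ lam ψ
  | .pand ψ₁ ψ₂ => SatSLP M μ κ lam ψ₁ ∧ SatSLP M μ κ lam ψ₂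
  | .puntil ψ₁ ψ₂ => ∃ i : ℕ,
      SatSLP M (μ.shift (histOf lam i)) κ (fun n => lam (n + i)) ψ₂ ∧
      ∀ j < i, SatSLP M (μ.shift (histOf lam j)) κ (fun n => lam (n + j)) ψ₁
  | .pnext ψ => SatSLP M (μ.shift [lam 0]) κ (fun n => lam (n + 1)) ψ
end

/-- Truth of an SL sentence at a state under the generalized SL semantics. -/
def SLTrue (M : NATS Ag St At) (s : St) (φ : StateForm Ag At X) : Prop :=
  SatSLS M (emptyAsg M X) [] s φ

/-- A NATS is deterministic if any selection of one choice per agent intersects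
    in a singleton. -/
def NATS.Deterministic (M : NATS Ag St At) : Prop :=
  ∀ (s : St) (c : Ag → Set St), (∀ a, c a ∈ M.Ch a s) → ∃ t : St, (⋂ a, c a) = {t}
/-- The tautology ⊤ (built from the atom p by state-level connectives). -/
def pTop (p : At) : PathForm Ag At X :=
  .ofState (.snot (.sand (.atom p) (.snot (.atom p))))

/-- □ψ abbreviates ¬(⊤ U ¬ψ). -/
def Box (p : At) (ψ : PathForm Ag At X) : PathForm Ag At X :=
  .pnot (.puntil (pTop p) (.pnot ψ))

/-- ψ9 := ⟨⟨x⟩⟩(a,x)□(⟨⟨x₀⟩⟩(a,x₀)∘p ∧ ⟨⟨x₀⟩⟩(a,x₀)∘¬p). -/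
def psi9 (a : Ag) (p : At) (x x₀ : X) : StateForm Ag At X :=
  .exq x (.bind {a} x (Box p (.pand
    (.ofState (.exq x₀ (.bind {a} x₀ (.pnext (.ofState (.atom p))))))
    (.ofState (.exq x₀ (.bind {a} x₀ (.pnext (.pnot (.ofState (.atom p))))))))))

/-- ψ7 = ψ8 := ⟨⟨x₁⟩⟩(a,x₁)□⟨⟨x₂⟩⟩(a,x₂)∘p. -/
def psi78 (a : Ag) (p : At) (x₁ x₂ : X) : StateForm Ag At X :=
  .exq x₁ (.bind {a} x₁ (Box p
    (.ofState (.exq x₂ (.bind {a} x₂ (.pnext (.ofState (.atom p))))))))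

mutual
/-- Polarity check: `pol = true` means positive polarity; every ⟨⟨x⟩⟩ must
    occur positively. -/
def ExS (pol : Bool) : StateForm Ag At X → Prop
  | .atom _ => True
  | .snot φ => ExS (!pol) φ
  | .sand φ₁ φ₂ => ExS pol φ₁ ∧ ExS pol φ₂
  | .exq _ φ => pol = true ∧ ExS pol φ
  | .bind _ _ ψ => ExP pol ψ
  | .unbind _ _ ψ => ExP pol ψ
def ExP (pol : Bool) : PathForm Ag At X → Prop
  | .ofState φ => ExS pol φ
  | .pnot ψ => ExP (!pol) ψ
  | .pand ψ₁ ψ₂ => ExP pol ψ₁ ∧ ExP pol ψ₂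
  | .puntil ψ₁ ψ₂ => ExP pol ψ₁ ∧ ExP pol ψ₂
  | .pnext ψ => ExP pol ψ
end

/-- An existential SL formula: every occurrence of ⟨⟨x⟩⟩ occurs positively. -/
def Existential (φ : StateForm Ag At X) : Prop := ExS true φ

/-- The structure M1. -/
noncomputable def M1 : NATS Unit (Fin 3) Unit where
  v := fun s => {_u : Unit | s = 1}
  Ch := fun _ s => if s = 0 then {{0}, {1}} else {{2}}
  Ch_nonempty := by
    intro a s
    split
    · exact ⟨{0}, by simp⟩
    · exact ⟨{2}, by simp⟩
  Ch_inter := by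
    intro a₁ a₂ h
    exact absurd (Subsingleton.elim a₁ a₂) h

/-- The structure M2. -/
noncomputable def M2 : NATS Unit (Fin 3) Unit where
  v := fun s => {_u : Unit | s = 1}
  Ch := fun _ s =>
    if s = 0 then {{0, 1}, {1}, {0}} else if s = 1 then {{0, 1}, {1}, {0, 2}} else {{2}}
  Ch_nonempty := by
    intro a s
    split
    · exact ⟨{0, 1}, by simp⟩
    · split
      · exact ⟨{0, 1}, by simp⟩
      · exact ⟨{2}, by simp⟩
  Ch_inter := by
    intro a₁ a₂ h
    exact absurd (Subsingleton.elim a₁ a₂) h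

/-- The binary-tree NATS T_L over {0,1}*, with p true exactly on L. -/
def treeNATS (L : Set (List Bool)) : NATS Unit (List Bool) Unit where
  v := fun w => {_u : Unit | w ∈ L}
  Ch := fun _ w => {{w ++ [false]}, {w ++ [true]}}
  Ch_nonempty := fun _ w => ⟨{w ++ [false]}, by simp⟩
  Ch_inter := by
    intro a₁ a₂ h
    exact absurd (Subsingleton.elim a₁ a₂) h
/-- First-order formulas over the signature (S₀, S₁, P, X₁, …, X_n) of binary trees,
    with n unary second-order variables; first-order variables are indexed by ℕ. -/
inductive FO (n : ℕ) : Type where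
  | eq (i j : ℕ)
  | s0 (i j : ℕ)
  | s1 (i j : ℕ)
  | pre (i : ℕ)
  | svar (k : Fin n) (i : ℕ)
  | fnot (θ : FO n)
  | fand (θ₁ θ₂ : FO n)
  | fex (i : ℕ) (θ : FO n)

/-- Satisfaction of a first-order formula in the binary tree ({0,1}*, S₀, S₁, L),
    with second-order parameters Xs and first-order valuation val. -/
noncomputable def FO.Sat {n : ℕ} (L : Set (List Bool)) (Xs : Fin n → Set (List Bool))
    (val : ℕ → List Bool) : FO n → Prop
  | .eq i j => val i = val j
  | .s0 i j => val j = val i ++ [false]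
  | .s1 i j => val j = val i ++ [true]
  | .pre i => val i ∈ L
  | .svar k i => val i ∈ Xs k
  | .fnot θ => ¬ FO.Sat L Xs val θ
  | .fand θ₁ θ₂ => FO.Sat L Xs val θ₁ ∧ FO.Sat L Xs val θ₂
  | .fex i θ => ∃ w : List Bool, FO.Sat L Xs (Function.update val i w) θ

/-- Free first-order variables of a first-order formula. -/
def FO.free {n : ℕ} : FO n → Set ℕ
  | .eq i j => {i, j}
  | .s0 i j => {i, j}
  | .s1 i j => {i, j}
  | .pre i => {i}
  | .svar _ i => {i}
  | .fnot θ => θ.free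
  | .fand θ₁ θ₂ => θ₁.free ∪ θ₂.free
  | .fex i θ => θ.free \ {i}

/-- Satisfaction of the Σ¹₁ sentence ∃X₁…∃X_n θ in the binary tree determined by L. -/
noncomputable def Sigma11Sat (L : Set (List Bool)) (n : ℕ) (θ : FO n) : Prop :=
  ∃ Xs : Fin n → Set (List Bool), FO.Sat L Xs (fun _ => []) θ

/-- unbind(A, y₁) … unbind(A, y_k) ψ for the list l = [y₁, …, y_k]. -/
def unbindSeq (A : Set Ag) (l : List X) (ψ : PathForm Ag At X) : PathForm Ag At X :=
  l.foldr (fun y ψ' => .ofState (.unbind A y ψ')) ψ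

mutual
/-- Translation of SL formulas into USL: each binder (A, x) is replaced by the
    sequence of unbinders of A from every variable in the list l, followed by (A, x). -/
def tS (l : List X) : StateForm Ag At X → StateForm Ag At X
  | .atom p => .atom p
  | .snot φ => .snot (tS l φ)
  | .sand φ₁ φ₂ => .sand (tS l φ₁) (tS l φ₂)
  | .exq x φ => .exq x (tS l φ)
  | .bind A x ψ =>
      match l with
      | [] => .bind A x (tP l ψ)
      | y :: ys => .unbind A y (unbindSeq A ys (.ofState (.bind A x (tP l ψ))))
  | .unbind A x ψ => .unbind A x (tP l ψ)
def tP (l : List X) : PathForm Ag At X → PathForm Ag At X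
  | .ofState φ => .ofState (tS l φ)
  | .pnot ψ => .pnot (tP l ψ)
  | .pand ψ₁ ψ₂ => .pand (tP l ψ₁) (tP l ψ₂)
  | .puntil ψ₁ ψ₂ => .puntil (tP l ψ₁) (tP l ψ₂)
  | .pnext ψ => .pnext (tP l ψ)
end
mutual
/-- Substitution replacing every occurrence of the subformula p by p ∧ G and every
    occurrence of ¬p by ¬p ∧ G. -/
def gsubS (G : PathForm Ag At X) : StateForm Ag At X → StateForm Ag At X
  | .atom q => .atom q
  | .snot φ => .snot (gsubS G φ)
  | .sand φ₁ φ₂ => .sand (gsubS G φ₁) (gsubS G φ₂)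
  | .exq x φ => .exq x (gsubS G φ)
  | .bind A x ψ => .bind A x (gsubP G ψ)
  | .unbind A x ψ => .unbind A x (gsubP G ψ)
def gsubP (G : PathForm Ag At X) : PathForm Ag At X → PathForm Ag At X
  | .ofState (.atom q) => .pand (.ofState (.atom q)) G
  | .pnot (.ofState (.atom q)) => .pand (.pnot (.ofState (.atom q))) G
  | .ofState φ => .ofState (gsubS G φ)
  | .pnot ψ => .pnot (gsubP G ψ)
  | .pand ψ₁ ψ₂ => .pand (gsubP G ψ₁) (gsubP G ψ₂)
  | .puntil ψ₁ ψ₂ => .puntil (gsubP G ψ₁) (gsubP G ψ₂)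
  | .pnext ψ => .pnext (gsubP G ψ)
end

/-- The guard formula □(⟨⟨v⟩⟩(a,v)∘p ∧ ⟨⟨v⟩⟩(a,v)∘¬p) over the single agent and atom. -/
def guardForm (v : ℕ) : PathForm Unit Unit ℕ :=
  Box () (.pand
    (.ofState (.exq v (.bind {()} v (.pnext (.ofState (.atom ()))))))
    (.ofState (.exq v (.bind {()} v (.pnext (.pnot (.ofState (.atom ()))))))))

/-- The family Γ_i of SL sentences (variable x is coded by 0 and x_i by i + 1). -/
def Gamma : ℕ → StateForm Unit Unit ℕ
  | 0 => psi9 () () 0 1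
  | i + 1 => gsubS (guardForm (i + 2)) (Gamma i)
/-- A concurrent game structure (labeling and transition function). -/
structure CGS (Ag St At Ac : Type) where
  v : St → Set At
  tr : St → (Ag → Ac) → St

/-- SL formulas (over CGS), as in Mogavero–Murano–Vardi. -/
inductive SLForm (Ag At X : Type) : Type where
  | atom (p : At)
  | fnot (φ : SLForm Ag At X)
  | fand (φ₁ φ₂ : SLForm Ag At X)
  | fnext (φ : SLForm Ag At X)
  | funtil (φ₁ φ₂ : SLForm Ag At X)
  | exq (x : X) (φ : SLForm Ag At X)
  | allq (x : X) (φ : SLForm Ag At X)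
  | bind (a : Ag) (x : X) (φ : SLForm Ag At X)

/-- A CGS strategy: a function from tracks (history, current state) to actions. -/
def CGSStrat (St Ac : Type) : Type := List St → St → Ac

/-- Translation of a CGS strategy by a track prefix. -/
def CGSStrat.shift (σ : CGSStrat St Ac) (τ : List St) : CGSStrat St Ac :=
  fun h s => σ (τ ++ h) s

/-- Auxiliary: (current state, history) of the unique play determined by one
    strategy per agent. -/
def playAux {Ac : Type} (G : CGS Ag St At Ac) (α : Ag → CGSStrat St Ac) (s : St) :
    ℕ → St × List St
  | 0 => (s, [])
  | n + 1 =>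
      let q := playAux G α s n
      (G.tr q.1 (fun a => α a q.2 q.1), q.2 ++ [q.1])

/-- The unique play determined by the strategies assigned to all agents. -/
def play {Ac : Type} (G : CGS Ag St At Ac) (α : Ag → CGSStrat St Ac) (s : St) (n : ℕ) : St :=
  (playAux G α s n).1

/-- SL satisfaction over a CGS, with a partial assignment χ of strategies to
    variables and a (total) assignment α of strategies to agents. -/
noncomputable def SLSatCGS {Ac : Type} (G : CGS Ag St At Ac) :
    (X → Option (CGSStrat St Ac)) → (Ag → CGSStrat St Ac) → St → SLForm Ag At X → Prop
  | _, _, s, .atom p => p ∈ G.v s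
  | χ, α, s, .fnot φ => ¬ SLSatCGS G χ α s φ
  | χ, α, s, .fand φ₁ φ₂ => SLSatCGS G χ α s φ₁ ∧ SLSatCGS G χ α s φ₂
  | χ, α, s, .exq x φ => ∃ σ : CGSStrat St Ac, SLSatCGS G (Function.update χ x (some σ)) α s φ
  | χ, α, s, .allq x φ => ∀ σ : CGSStrat St Ac, SLSatCGS G (Function.update χ x (some σ)) α s φ
  | χ, α, s, .bind a x φ => SLSatCGS G χ (Function.update α a ((χ x).getD (α a))) s φ
  | χ, α, s, .fnext φ =>
      SLSatCGS G (fun y => (χ y).map (fun σ => σ.shift [s])) (fun b => (α b).shift [s])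
        (play G α s 1) φ
  | χ, α, s, .funtil φ₁ φ₂ => ∃ i : ℕ,
      SLSatCGS G (fun y => (χ y).map (fun σ => σ.shift ((List.range i).map (play G α s))))
        (fun b => (α b).shift ((List.range i).map (play G α s))) (play G α s i) φ₂ ∧
      ∀ j < i,
        SLSatCGS G (fun y => (χ y).map (fun σ => σ.shift ((List.range j).map (play G α s))))
          (fun b => (α b).shift ((List.range j).map (play G α s))) (play G α s j) φ₁

/-- Free agents of an SL formula (temporal operators free all agents; a binder
    (a, x) binds agent a). -/
def SLForm.freeAg : SLForm Ag At X → Set Ag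
  | .atom _ => ∅
  | .fnot φ => φ.freeAg
  | .fand φ₁ φ₂ => φ₁.freeAg ∪ φ₂.freeAg
  | .fnext _ => Set.univ
  | .funtil _ _ => Set.univ
  | .exq _ φ => φ.freeAg
  | .allq _ φ => φ.freeAg
  | .bind a _ φ => φ.freeAg \ {a}

/-- Free variables of an SL formula. -/
noncomputable def SLForm.freeVr : SLForm Ag At X → Set X
  | .atom _ => ∅
  | .fnot φ => φ.freeVr
  | .fand φ₁ φ₂ => φ₁.freeVr ∪ φ₂.freeVr
  | .fnext φ => φ.freeVr
  | .funtil φ₁ φ₂ => φ₁.freeVr ∪ φ₂.freeVr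
  | .exq x φ => φ.freeVr \ {x}
  | .allq x φ => φ.freeVr \ {x}
  | .bind a x φ => if a ∈ φ.freeAg then φ.freeVr ∪ {x} else φ.freeVr

/-- An SL sentence: no free agent and no free variable. -/
def SLForm.IsSentence (φ : SLForm Ag At X) : Prop := φ.freeAg = ∅ ∧ φ.freeVr = ∅

/-- Truth of an SL sentence at a state of a CGS: with the empty assignment of
    variables (and any assignment of agents, which is irrelevant for sentences). -/
noncomputable def SLTrueCGS {Ac : Type} (G : CGS Ag St At Ac) (s : St)
    (φ : SLForm Ag At X) : Prop :=
  ∀ α : Ag → CGSStrat St Ac, SLSatCGS G (fun _ => none) α s φ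

/-! The strategy `avoidSink` for `x` chooses {s₀, s₁} at s₀ and s₁, so every outcome stays in
{s₀, s₁}. A USL binder intersects the new choice with the committed ones instead of revoking
them, so at s₀ and s₁ a second strategy `x₀` of the same agent can force the next state
to be s₁ (choose {s₁}) or s₀ (choose {s₀} at s₀ and {s₀, s₂} at s₁): both ∘p and ∘¬p are
enforceable forever. -/

section Semantics

variable {M : NATS Ag St At} {μ : M.Assignment X} {κ : Commitment Ag X}

theorem bindChoice_singleton {σ : M.Strategy} {x : X} (hx : μ x = some σ) (a : Ag)
    (h : List St) (s : St) : bindChoice μ {a} x h s = σ.f a h s := by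
  simp [bindChoice, hx]

theorem ctxFun_singleton {σ : M.Strategy} {x : X} (hx : μ x = some σ) {a : Ag}
    {h : List St} {s : St} (hne : (σ.f a h s).Nonempty) :
    ctxFun μ [({a}, x)] h s = σ.f a h s := by
  simp [ctxFun, bindChoice_singleton hx, hne]

theorem ctxFun_pair {σ τ : M.Strategy} {x y : X} (hx : μ x = some σ) (hy : μ y = some τ)
    {a : Ag} {h : List St} {s : St} (hne : (σ.f a h s ∩ τ.f a h s).Nonempty) :
    ctxFun μ [({a}, y), ({a}, x)] h s = σ.f a h s ∩ τ.f a h s := by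
  have hσ : (σ.f a h s).Nonempty := hne.mono Set.inter_subset_left
  rw [ctxFun]
  dsimp only
  rw [ctxFun_singleton hx hσ, bindChoice_singleton hy]
  simp [hne]

theorem outcomes_mem_of_invariant {S : Set St} (hS : ∀ h, ∀ t ∈ S, ctxFun μ κ h t ⊆ S)
    {s : St} (hs : s ∈ S) {lam : ℕ → St} (hlam : lam ∈ outcomes M μ κ s) (n : ℕ) :
    lam n ∈ S := by
  induction n with
  | zero => exact hlam.2.1 ▸ hs
  | succ n ih => exact hS _ _ ih (hlam.2.2 n)

theorem outcomes_one_mem {s : St} {lam : ℕ → St} (hlam : lam ∈ outcomes M μ κ s) :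
    lam 1 ∈ ctxFun μ κ [] s := by
  simpa [histOf, hlam.2.1] using hlam.2.2 0

theorem satS_bind_next_atom {A : Set Ag} {x : X} {s : St} {p : At}
    (h : ∀ t ∈ ctxFun μ ((A, x) :: κ) [] s, p ∈ M.v t) :
    SatS M μ κ s (.bind A x (.pnext (.ofState (.atom p)))) := by
  intro lam hlam
  exact h _ (outcomes_one_mem hlam)

theorem satS_bind_next_not_atom {A : Set Ag} {x : X} {s : St} {p : At}
    (h : ∀ t ∈ ctxFun μ ((A, x) :: κ) [] s, p ∉ M.v t) :
    SatS M μ κ s (.bind A x (.pnext (.pnot (.ofState (.atom p))))) := by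
  intro lam hlam
  exact h _ (outcomes_one_mem hlam)

theorem satS_exq_of_forall {x : X} {s : St} {φ : StateForm Ag At X} (σ : M.Strategy)
    (h : ∀ μ' : M.Assignment X, μ' x = some σ → SatS M μ' κ s φ) :
    SatS M μ κ s (.exq x φ) :=
  ⟨σ, h _ (Function.update_self _ _ _)⟩

theorem satP_pTop (lam : ℕ → St) (p : At) : SatP M μ κ lam (pTop p) := by
  simp [pTop, SatP, SatS]

theorem satP_box {lam : ℕ → St} {p : At} {ψ : PathForm Ag At X} :
    SatP M μ κ lam (Box p ψ) ↔
      ∀ i, SatP M (μ.shift (histOf lam i)) κ (fun n => lam (n + i)) ψ := by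
  simp [Box, SatP, satP_pTop]

end Semantics

def NATS.Strategy.memoryless (M : NATS Ag St At) (g : Ag → St → Set St)
    (hg : ∀ a s, g a s ∈ M.Ch a s) : M.Strategy :=
  ⟨fun a _ s => g a s, fun a _ s => hg a s⟩

@[simp]
theorem NATS.Strategy.shift_memoryless (M : NATS Ag St At) (g : Ag → St → Set St)
    (hg : ∀ a s, g a s ∈ M.Ch a s) (τ : List St) :
    (NATS.Strategy.memoryless M g hg).shift τ = NATS.Strategy.memoryless M g hg :=
  rfl

namespace M2

noncomputable def avoidSink : M2.Strategy :=
  .memoryless M2 (fun _ s => if s = 2 then {2} else {0, 1}) (by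
    intro _ s; fin_cases s <;> simp [M2])

noncomputable def towardP : M2.Strategy :=
  .memoryless M2 (fun _ s => if s = 2 then {2} else {1}) (by
    intro _ s; fin_cases s <;> simp [M2])

noncomputable def towardNotP : M2.Strategy :=
  .memoryless M2 (fun _ s => if s = 1 then {0, 2} else {s}) (by
    intro _ s; fin_cases s <;> simp [M2])

variable {X : Type} {μ : M2.Assignment X} {x : X}

theorem outcomes_ne_two (hx : μ x = some avoidSink) {s : Fin 3} (hs : s ≠ 2)
    {lam : ℕ → Fin 3} (hlam : lam ∈ outcomes M2 μ [({()}, x)] s) (n : ℕ) : lam n ≠ 2 := by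
  refine outcomes_mem_of_invariant (S := {t | t ≠ 2}) (fun h t (ht : t ≠ 2) => ?_) hs hlam n
  rw [ctxFun_singleton hx (by simp [avoidSink, NATS.Strategy.memoryless, ht])]
  simp [avoidSink, NATS.Strategy.memoryless, ht, Set.subset_def]

theorem ctxFun_update_avoidSink (hx : μ x = some avoidSink) {y : X} (hxy : y ≠ x)
    {τ : M2.Strategy} {s r : Fin 3} (hI : avoidSink.f () [] s ∩ τ.f () [] s = {r}) :
    ctxFun (Function.update μ y (some τ)) [({()}, y), ({()}, x)] [] s = {r} := by
  rw [ctxFun_pair ((Function.update_of_ne hxy.symm _ _).trans hx) (Function.update_self _ _ _)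
    (by rw [hI]; exact Set.singleton_nonempty r), hI]

theorem satS_exq_next_p (hx : μ x = some avoidSink) {y : X} (hxy : y ≠ x) {s : Fin 3}
    (hs : s ≠ 2) :
    SatS M2 μ [({()}, x)] s (.exq y (.bind {()} y (.pnext (.ofState (.atom ()))))) := by
  have hI : avoidSink.f () [] s ∩ towardP.f () [] s = {1} := by
    ext t
    fin_cases s <;> fin_cases t <;> simp_all [avoidSink, towardP, NATS.Strategy.memoryless]
  refine ⟨towardP, satS_bind_next_atom fun t ht => ?_⟩
  rw [ctxFun_update_avoidSink hx hxy hI, Set.mem_singleton_iff] at ht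
  simp [ht, M2]

theorem satS_exq_next_not_p (hx : μ x = some avoidSink) {y : X} (hxy : y ≠ x) {s : Fin 3}
    (hs : s ≠ 2) :
    SatS M2 μ [({()}, x)] s (.exq y (.bind {()} y (.pnext (.pnot (.ofState (.atom ())))))) := by
  have hI : avoidSink.f () [] s ∩ towardNotP.f () [] s = {0} := by
    ext t
    fin_cases s <;> fin_cases t <;> simp_all [avoidSink, towardNotP, NATS.Strategy.memoryless]
  refine ⟨towardNotP, satS_bind_next_not_atom fun t ht => ?_⟩
  rw [ctxFun_update_avoidSink hx hxy hI, Set.mem_singleton_iff] at ht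
  simp [ht, M2]

end M2

/-- the USL sentence ψ9 is satisfiable in a NATS: it is true at state
s₀ of the non-deterministic NATS M2. -/
theorem psi9_true_in_M2 :
    USLTrue M2 (0 : Fin 3) (psi9 () () true false) := by
  refine satS_exq_of_forall M2.avoidSink fun μ hx lam hlam => satP_box.2 fun i => ?_
  have hshift : μ.shift (histOf lam i) true = some M2.avoidSink := by
    simp [NATS.Assignment.shift, hx, M2.avoidSink]
  have hs : lam (0 + i) ≠ 2 := M2.outcomes_ne_two hx (by decide) hlam _
  exact ⟨M2.satS_exq_next_p hshift Bool.false_ne_true hs,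
    M2.satS_exq_next_not_p hshift Bool.false_ne_true hs⟩

end USL
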